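/- (Discrete Sobolev inequality, sup version.) For every nonnegative integer n there exists C_n > 0 such that for every h > 0, every mesh function u with u ∈ L²_h and D₊ⁿu ∈ L²_h, and every integer k with 0 ≤ k < n, one has sup_{m∈ℤ} |D₊ᵏu(m)| ≤ C_n·(‖u‖_{L²_h} + ‖D₊ⁿu‖_{L²_h}). -/

import Mathlib

noncomputable section

open Set Filter

/-- Forward discrete derivative `D₊u(n) = (u(n+1) - u(n))/h`. -/
def Dp (h : ℝ) (u : ℤ → ℝ) : ℤ → ℝ := fun n => (u (n + 1) - u n) / h

/-- Backward discrete derivative `D₋u(n) = (u(n) - u(n-1))/h`. -/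
def Dm (h : ℝ) (u : ℤ → ℝ) : ℤ → ℝ := fun n => (u n - u (n - 1)) / h

/-- Central discrete derivative `D₀u(n) = (u(n+1) - u(n-1))/(2h)`. -/
def D0 (h : ℝ) (u : ℤ → ℝ) : ℤ → ℝ := fun n => (u (n + 1) - u (n - 1)) / (2 * h)

/-- Shift operator `Eu(n) = u(n+1)`. -/
def Esh (u : ℤ → ℝ) : ℤ → ℝ := fun n => u (n + 1)

/-- Membership in `L²_h`: square-summability of the mesh function. -/
def MemL2 (u : ℤ → ℝ) : Prop := Summable fun n : ℤ => (u n) ^ 2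

/-- The discrete inner product `(u,v)_{L²_h} = Σₙ u(n)·v(n)·h`. -/
def ip2 (h : ℝ) (u v : ℤ → ℝ) : ℝ := ∑' n : ℤ, u n * v n * h

/-- The discrete `L²_h` norm. -/
def nrm (h : ℝ) (u : ℤ → ℝ) : ℝ := Real.sqrt (∑' n : ℤ, (u n) ^ 2 * h)

/-- The mesh weight `⟨x⟩ = √(x² + 1)` evaluated at the mesh point `x = n·h`. -/
def jp (h : ℝ) (n : ℤ) : ℝ := Real.sqrt (((n : ℝ) * h) ^ 2 + 1)


lemma tsum_sq_nonneg (h : ℝ) (hh : 0 ≤ h) (u : ℤ → ℝ) : 0 ≤ ∑' n : ℤ, (u n) ^ 2 * h :=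
  tsum_nonneg fun n => mul_nonneg (sq_nonneg _) hh

lemma nrm_nonneg (h : ℝ) (u : ℤ → ℝ) : 0 ≤ nrm h u := Real.sqrt_nonneg _

lemma nrm_sq {h : ℝ} (hh : 0 ≤ h) (u : ℤ → ℝ) : nrm h u ^ 2 = ∑' n : ℤ, (u n) ^ 2 * h :=
  Real.sq_sqrt (tsum_sq_nonneg h hh u)

lemma MemL2.shift {u : ℤ → ℝ} (hu : MemL2 u) (c : ℤ) : MemL2 fun n => u (n + c) :=
  ((Equiv.addRight c).summable_iff (f := fun n : ℤ => (u n) ^ 2)).2 hu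

lemma tsum_shift (u : ℤ → ℝ) (c : ℤ) : ∑' n : ℤ, u (n + c) = ∑' n : ℤ, u n :=
  (Equiv.addRight c).tsum_eq u

lemma MemL2.dp {h : ℝ} {u : ℤ → ℝ} (hh : h ≠ 0) (hu : MemL2 u) : MemL2 (Dp h u) := by
  have h1 : MemL2 fun n => u (n + 1) := hu.shift 1
  have hsum : Summable fun n : ℤ => (2 * (u (n + 1)) ^ 2 + 2 * (u n) ^ 2) / h ^ 2 :=
    ((h1.mul_left 2).add (hu.mul_left 2)).div_const _
  refine hsum.of_nonneg_of_le (fun n => sq_nonneg _) fun n => ?_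
  have hc : (0 : ℝ) < h ^ 2 := by positivity
  unfold Dp
  rw [div_pow]
  gcongr
  nlinarith [sq_nonneg (u (n + 1) + u n)]

lemma summable_abs_mul {f g : ℤ → ℝ} (hf : Summable fun n => (f n) ^ 2)
    (hg : Summable fun n => (g n) ^ 2) : Summable fun n : ℤ => |f n * g n| := by
  refine (((hf.add hg)).div_const 2).of_nonneg_of_le (fun n => abs_nonneg _) fun n => ?_
  rw [abs_mul]
  nlinarith [sq_nonneg (|f n| - |g n|), sq_abs (f n), sq_abs (g n), abs_nonneg (f n),
    abs_nonneg (g n)]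

lemma summable_mul {f g : ℤ → ℝ} (hf : Summable fun n => (f n) ^ 2)
    (hg : Summable fun n => (g n) ^ 2) : Summable fun n : ℤ => f n * g n :=
  (summable_abs_mul hf hg).of_abs

lemma tsum_abs_mul_le {f g : ℤ → ℝ} (hf : Summable fun n => (f n) ^ 2)
    (hg : Summable fun n => (g n) ^ 2) :
    ∑' n : ℤ, |f n * g n| ≤
      Real.sqrt (∑' n : ℤ, (f n) ^ 2) * Real.sqrt (∑' n : ℤ, (g n) ^ 2) := by
  refine Summable.tsum_le_of_sum_le (summable_abs_mul hf hg) fun s => ?_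
  have h1 : (∑ n ∈ s, |f n * g n|) ^ 2 ≤ (∑ n ∈ s, (f n) ^ 2) * ∑ n ∈ s, (g n) ^ 2 := by
    have := Finset.sum_mul_sq_le_sq_mul_sq s (fun n => |f n|) (fun n => |g n|)
    simpa [abs_mul, sq_abs] using this
  have h2 : (∑ n ∈ s, (f n) ^ 2) ≤ ∑' n : ℤ, (f n) ^ 2 :=
    Summable.sum_le_tsum s (fun n _ => sq_nonneg _) hf
  have h3 : (∑ n ∈ s, (g n) ^ 2) ≤ ∑' n : ℤ, (g n) ^ 2 :=
    Summable.sum_le_tsum s (fun n _ => sq_nonneg _) hg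
  have h4 : 0 ≤ ∑ n ∈ s, |f n * g n| := Finset.sum_nonneg fun n _ => abs_nonneg _
  have h5 : (0:ℝ) ≤ ∑' n : ℤ, (g n) ^ 2 := tsum_nonneg fun n => sq_nonneg _
  calc ∑ n ∈ s, |f n * g n| = Real.sqrt ((∑ n ∈ s, |f n * g n|) ^ 2) := (Real.sqrt_sq h4).symm
    _ ≤ Real.sqrt ((∑' n : ℤ, (f n) ^ 2) * ∑' n : ℤ, (g n) ^ 2) := by
        refine Real.sqrt_le_sqrt (h1.trans ?_)
        exact mul_le_mul h2 h3 (Finset.sum_nonneg fun n _ => sq_nonneg _) (le_trans (Finset.sum_nonneg fun n _ => sq_nonneg _) h2)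
    _ = _ := Real.sqrt_mul (tsum_nonneg fun n => sq_nonneg _) _

lemma tsum_abs_mul_h_le {h : ℝ} (hh : 0 < h) {f g : ℤ → ℝ} (hf : MemL2 f) (hg : MemL2 g) :
    ∑' n : ℤ, |f n * g n| * h ≤ nrm h f * nrm h g := by
  set s := Real.sqrt h with hs
  have hs2 : s ^ 2 = h := Real.sq_sqrt hh.le
  have hfs : Summable fun n : ℤ => (f n * s) ^ 2 := by
    simpa [mul_pow, hs2] using hf.mul_right h
  have hgs : Summable fun n : ℤ => (g n * s) ^ 2 := by
    simpa [mul_pow, hs2] using hg.mul_right h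
  have := tsum_abs_mul_le hfs hgs
  have e1 : ∀ n : ℤ, |(f n * s) * (g n * s)| = |f n * g n| * h := by
    intro n
    rw [abs_mul, abs_mul, abs_mul]
    rw [abs_of_nonneg (Real.sqrt_nonneg h)]
    rw [abs_mul]
    ring_nf
    rw [hs2]
    ring
  simp only [e1] at this
  simp only [mul_pow, hs2] at this
  exact this

lemma tsum_shift_sub_self (c : ℤ → ℝ) (hc : Summable c) :
    ∑' n : ℤ, (c (n + 1) - c n) = 0 := by
  have h1 : Summable fun n : ℤ => c (n + 1) :=
    ((Equiv.addRight (1:ℤ)).summable_iff (f := c)).2 hc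
  rw [Summable.tsum_sub h1 hc, tsum_shift c 1, sub_self]

/-- Discrete interpolation: `‖Dv‖² ≤ ‖v‖ ‖D²v‖`. -/
lemma interp {h : ℝ} (hh : 0 < h) {v : ℤ → ℝ} (hv : MemL2 v) :
    (∑' n : ℤ, (Dp h v n) ^ 2 * h) ≤ nrm h v * nrm h (Dp h (Dp h v)) := by
  set w := Dp h v with hw_def
  have hw : MemL2 w := hv.dp hh.ne'
  have hw2 : MemL2 (Dp h w) := hw.dp hh.ne'
  have hv1 : MemL2 fun n => v (n + 1) := hv.shift 1
  have estep : ∀ (f : ℤ → ℝ) (n : ℤ), f (n + 1) - f n = Dp h f n * h := by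
    intro f n; unfold Dp; field_simp
  -- summabilities
  have hsum1 : Summable fun n : ℤ => w n * (v (n + 1) - v n) := by
    have : (fun n : ℤ => w n * (v (n + 1) - v n)) = fun n => (w n) ^ 2 * h := by
      funext n; rw [estep v n]; show w n * (w n * h) = _; ring
    rw [this]; exact hw.mul_right h
  have hsum2 : Summable fun n : ℤ => v (n + 1) * (w (n + 1) - w n) := by
    have : (fun n : ℤ => v (n + 1) * (w (n + 1) - w n))
        = fun n => (v (n + 1) * Dp h w n) * h := by
      funext n; rw [estep w n]; ring
    rw [this]
    exact (summable_mul hv1 hw2).mul_right h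
  have hc : Summable fun n : ℤ => v n * w n := summable_mul hv hw
  -- Abel summation
  have key : (∑' n : ℤ, w n * (v (n + 1) - v n))
      + ∑' n : ℤ, v (n + 1) * (w (n + 1) - w n) = 0 := by
    rw [← Summable.tsum_add hsum1 hsum2]
    rw [show (fun n : ℤ => w n * (v (n + 1) - v n) + v (n + 1) * (w (n + 1) - w n))
        = fun n : ℤ => (fun m => v m * w m) (n + 1) - (fun m => v m * w m) n by
      funext n; simp; ring]
    exact tsum_shift_sub_self _ hc
  have e1 : (∑' n : ℤ, (w n) ^ 2 * h) = ∑' n : ℤ, w n * (v (n + 1) - v n) := by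
    congr 1; funext n; rw [estep v n]; show _ = w n * (w n * h); ring
  have habs : Summable fun n : ℤ => |v (n + 1) * Dp h w n * h| := by
    have := (summable_abs_mul hv1 hw2).mul_right h
    refine this.congr fun n => ?_
    rw [abs_mul (v (n + 1) * Dp h w n) h, abs_of_nonneg hh.le]
  have e2 : |∑' n : ℤ, v (n + 1) * (w (n + 1) - w n)|
      ≤ ∑' n : ℤ, |v (n + 1) * Dp h w n| * h := by
    have heq : (fun n : ℤ => v (n + 1) * (w (n + 1) - w n))
        = fun n : ℤ => v (n + 1) * Dp h w n * h := by
      funext n; rw [estep w n]; ring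
    rw [heq]
    calc |∑' n : ℤ, v (n + 1) * Dp h w n * h|
        = ‖∑' n : ℤ, v (n + 1) * Dp h w n * h‖ := (Real.norm_eq_abs _).symm
      _ ≤ ∑' n : ℤ, ‖v (n + 1) * Dp h w n * h‖ := norm_tsum_le_tsum_norm (by
            simpa [Real.norm_eq_abs, abs_mul] using habs)
      _ = ∑' n : ℤ, |v (n + 1) * Dp h w n| * h := by
            congr 1; funext n
            rw [Real.norm_eq_abs, abs_mul, abs_of_nonneg hh.le]
  have e3 : ∑' n : ℤ, |v (n + 1) * Dp h w n| * h
      ≤ nrm h (fun n => v (n + 1)) * nrm h (Dp h w) := tsum_abs_mul_h_le hh hv1 hw2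
  have e4 : nrm h (fun n => v (n + 1)) = nrm h v := by
    unfold nrm
    congr 1
    exact tsum_shift (fun n => (v n) ^ 2 * h) 1
  calc (∑' n : ℤ, (w n) ^ 2 * h) = - ∑' n : ℤ, v (n + 1) * (w (n + 1) - w n) := by
        rw [e1]; linarith [key]
    _ ≤ |∑' n : ℤ, v (n + 1) * (w (n + 1) - w n)| := neg_le_abs _
    _ ≤ nrm h v * nrm h (Dp h (Dp h v)) := by rw [← e4]; exact e2.trans e3

/-- Discrete maximum principle for midpoint-subconvex sequences. -/
lemma max_principle (g : ℕ → ℝ) (n : ℕ)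
    (hconv : ∀ j, g (j + 1) ≤ (g j + g (j + 2)) / 2) :
    ∀ k ≤ n, g k ≤ max (g 0) (g n) := by
  set d : ℕ → ℝ := fun j => g (j + 1) - g j with hd
  have hmono : Monotone d := by
    refine monotone_nat_of_le_succ fun j => ?_
    have := hconv j
    simp only [hd]
    linarith
  have htel : ∀ k : ℕ, g k = g 0 + ∑ i ∈ Finset.range k, d i := by
    intro k
    rw [Finset.sum_range_sub (fun i => g i)]
    ring
  intro k hk
  by_cases h0 : g k ≤ g 0
  · exact h0.trans (le_max_left _ _)
  · push_neg at h0
    have hpos : (0:ℝ) < ∑ i ∈ Finset.range k, d i := by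
      have := htel k; linarith
    obtain ⟨i, hi, hdi⟩ := Finset.exists_lt_of_sum_lt (by
      simpa using hpos : ∑ _i ∈ Finset.range k, (0:ℝ) < ∑ i ∈ Finset.range k, d i)
    refine le_trans ?_ (le_max_right _ _)
    have hik : i < k := Finset.mem_range.1 hi
    have : (0:ℝ) ≤ ∑ l ∈ Finset.Ico k n, d l := by
      refine Finset.sum_nonneg fun l hl => ?_
      have hkl : k ≤ l := (Finset.mem_Ico.1 hl).1
      exact le_trans hdi.le (hmono (le_trans hik.le hkl))
    have hsum : ∑ i ∈ Finset.range n, d i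
        = ∑ i ∈ Finset.range k, d i + ∑ l ∈ Finset.Ico k n, d l := by
      rw [Finset.range_eq_Ico, Finset.range_eq_Ico]
      exact (Finset.sum_Ico_consecutive (f := d) (Nat.zero_le k) hk).symm
    have h1 := htel k
    have h2 := htel n
    rw [hsum] at h2
    linarith

/-- Discrete Agmon inequality: `v(m)² ≤ 2‖v‖‖Dv‖`. -/
lemma agmon {h : ℝ} (hh : 0 < h) {v : ℤ → ℝ} (hv : MemL2 v) (m : ℤ) :
    (v m) ^ 2 ≤ 2 * (nrm h v * nrm h (Dp h v)) := by
  set w : ℤ → ℝ := fun n => (v n) ^ 2 with hw_def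
  have hw : Summable w := hv
  have hws : Summable fun n : ℤ => w (n + 1) :=
    ((Equiv.addRight (1:ℤ)).summable_iff (f := w)).2 hw
  have habs : Summable fun n : ℤ => |w (n + 1) - w n| := (hws.sub hw).abs
  set S := ∑' n : ℤ, |w (n + 1) - w n| with hS_def
  have hbound : ∀ N : ℕ, w m ≤ w (m + N) + S := by
    intro N
    have htel : ∑ i ∈ Finset.range N, (w (m + i) - w (m + (i+1))) = w m - w (m + N) := by
      have := Finset.sum_range_sub' (fun i : ℕ => w (m + i)) N
      simpa using this
    have hinj : Function.Injective (fun i : ℕ => m + (i : ℤ)) := by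
      intro a b hab; simpa using hab
    have hle : ∑ i ∈ Finset.range N, (w (m + i) - w (m + (i+1))) ≤ S := by
      calc ∑ i ∈ Finset.range N, (w (m + i) - w (m + (i+1)))
          ≤ ∑ i ∈ Finset.range N, |w ((m + i) + 1) - w (m + i)| := by
            refine Finset.sum_le_sum fun i _ => ?_
            have : m + ((i:ℤ)+1) = (m + i) + 1 := by ring
            rw [this]
            rw [abs_sub_comm]
            exact le_abs_self _
        _ = ∑ j ∈ (Finset.range N).image (fun i : ℕ => m + (i:ℤ)), |w (j + 1) - w j| := by
            rw [Finset.sum_image (fun a _ b _ hab => hinj hab)]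
        _ ≤ S := Summable.sum_le_tsum _ (fun j _ => abs_nonneg _) habs
    push_cast at htel
    linarith [htel ▸ hle, htel]
  have hsumN : Summable fun i : ℕ => w (m + i) :=
    hw.comp_injective (fun a b hab => by simpa using hab)
  have hlim : Tendsto (fun N : ℕ => w (m + N) + S) atTop (nhds (0 + S)) :=
    (hsumN.tendsto_atTop_zero).add tendsto_const_nhds
  have hwm : w m ≤ S := by
    have := ge_of_tendsto hlim (Eventually.of_forall hbound)
    linarith
  -- now bound S
  have hv1 : MemL2 fun n => v (n + 1) := hv.shift 1
  have hplus : MemL2 fun n => v (n + 1) + v n := by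
    have : Summable fun n : ℤ => 2 * (v (n+1)) ^ 2 + 2 * (v n) ^ 2 :=
      (hv1.mul_left 2).add (hv.mul_left 2)
    refine this.of_nonneg_of_le (fun n => sq_nonneg _) fun n => ?_
    show (v (n + 1) + v n) ^ 2 ≤ 2 * (v (n+1)) ^ 2 + 2 * (v n) ^ 2
    nlinarith [sq_nonneg (v (n+1) - v n)]
  have hSeq : S = ∑' n : ℤ, |Dp h v n * (v (n + 1) + v n)| * h := by
    rw [hS_def]
    congr 1; funext n
    have e : w (n + 1) - w n = Dp h v n * (v (n + 1) + v n) * h := by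
      simp only [hw_def, Dp]
      field_simp
      ring
    rw [e, abs_mul (Dp h v n * (v (n + 1) + v n)) h, abs_of_nonneg hh.le]
  have hCS : S ≤ nrm h (Dp h v) * nrm h (fun n => v (n + 1) + v n) := by
    rw [hSeq]; exact tsum_abs_mul_h_le hh (hv.dp hh.ne') hplus
  have hnp : nrm h (fun n => v (n + 1) + v n) ≤ 2 * nrm h v := by
    have h1 : (∑' n : ℤ, (v (n + 1) + v n) ^ 2 * h)
        ≤ ∑' n : ℤ, (2 * (v (n+1))^2 * h + 2 * (v n)^2 * h) := by
      refine Summable.tsum_le_tsum (fun n => by nlinarith [sq_nonneg (v (n+1) - v n)])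
        (hplus.mul_right h) ?_
      exact ((hv1.mul_left 2).mul_right h).add ((hv.mul_left 2).mul_right h)
    have h2 : (∑' n : ℤ, (2 * (v (n+1))^2 * h + 2 * (v n)^2 * h))
        = 4 * ∑' n : ℤ, (v n) ^ 2 * h := by
      rw [Summable.tsum_add ((hv1.mul_left 2).mul_right h) ((hv.mul_left 2).mul_right h)]
      have e1 : (∑' n : ℤ, 2 * (v (n+1))^2 * h) = 2 * ∑' n : ℤ, (v (n+1))^2 * h := by
        rw [← tsum_mul_left]; congr 1; funext n; ring
      have e2 : (∑' n : ℤ, 2 * (v n)^2 * h) = 2 * ∑' n : ℤ, (v n)^2 * h := by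
        rw [← tsum_mul_left]; congr 1; funext n; ring
      rw [e1, e2, tsum_shift (fun n => (v n)^2 * h) 1]
      ring
    unfold nrm
    calc Real.sqrt (∑' n : ℤ, (v (n + 1) + v n) ^ 2 * h)
        ≤ Real.sqrt (4 * ∑' n : ℤ, (v n) ^ 2 * h) := Real.sqrt_le_sqrt (by linarith)
      _ = 2 * Real.sqrt (∑' n : ℤ, (v n) ^ 2 * h) := by
          rw [show (4 : ℝ) * ∑' n : ℤ, (v n) ^ 2 * h = (2:ℝ)^2 * ∑' n : ℤ, (v n) ^ 2 * h by ring,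
            Real.sqrt_mul (by positivity), Real.sqrt_sq (by norm_num)]
  have hfinal : S ≤ 2 * (nrm h v * nrm h (Dp h v)) := by
    calc S ≤ nrm h (Dp h v) * nrm h (fun n => v (n + 1) + v n) := hCS
      _ ≤ nrm h (Dp h v) * (2 * nrm h v) := by
          exact mul_le_mul_of_nonneg_left hnp (nrm_nonneg _ _)
      _ = 2 * (nrm h v * nrm h (Dp h v)) := by ring
  exact le_trans hwm hfinal

/-- **Lemma 2.3 (2)** (discrete Sobolev inequality, sup version).  For every `n` there is
`Cₙ > 0`, independent of `h`, such that for every mesh function `u` with `u, D₊ⁿu ∈ L²_h` and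
every `0 ≤ k < n`, `sup_m |D₊ᵏu(m)| ≤ Cₙ (‖u‖_{L²_h} + ‖D₊ⁿu‖_{L²_h})`. -/
theorem discrete_sobolev_sup (n : ℕ) :
    ∃ C > (0 : ℝ), ∀ h : ℝ, 0 < h → ∀ u : ℤ → ℝ, MemL2 u → MemL2 ((Dp h)^[n] u) →
      ∀ k : ℕ, k < n → ∀ m : ℤ,
        |(Dp h)^[k] u m| ≤ C * (nrm h u + nrm h ((Dp h)^[n] u)) := by
  refine ⟨2, by norm_num, ?_⟩
  intro h hh u hu _hun k hk m
  set v : ℕ → ℤ → ℝ := fun j => (Dp h)^[j] u with hv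
  have hvs : ∀ j, v (j + 1) = Dp h (v j) := fun j => by
    simp [hv, Function.iterate_succ_apply']
  have hmem : ∀ j, MemL2 (v j) := by
    intro j
    induction j with
    | zero => simpa [hv] using hu
    | succ j ih => rw [hvs j]; exact ih.dp hh.ne'
  set g : ℕ → ℝ := fun j => ∑' i : ℤ, (v j i) ^ 2 * h with hg
  have hgnn : ∀ j, 0 ≤ g j := fun j => tsum_sq_nonneg h hh.le _
  have hconv : ∀ j, g (j + 1) ≤ (g j + g (j + 2)) / 2 := by
    intro j
    have h1 : g (j + 1) ≤ nrm h (v j) * nrm h (v (j + 2)) := by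
      have := interp hh (hmem j)
      rw [hg]
      simp only [hvs (j + 1), hvs j]
      exact this
    have h2 : nrm h (v j) * nrm h (v (j + 2)) ≤ (g j + g (j + 2)) / 2 := by
      have e1 : nrm h (v j) = Real.sqrt (g j) := rfl
      have e2 : nrm h (v (j + 2)) = Real.sqrt (g (j + 2)) := rfl
      rw [e1, e2]
      nlinarith [sq_nonneg (Real.sqrt (g j) - Real.sqrt (g (j + 2))),
        Real.sq_sqrt (hgnn j), Real.sq_sqrt (hgnn (j + 2)),
        Real.sqrt_nonneg (g j), Real.sqrt_nonneg (g (j + 2))]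
    exact h1.trans h2
  have hmax := max_principle g n hconv
  have hNle : ∀ j, j ≤ n → nrm h (v j) ≤ nrm h (v 0) + nrm h (v n) := by
    intro j hj
    have h1 : nrm h (v j) ≤ Real.sqrt (max (g 0) (g n)) :=
      Real.sqrt_le_sqrt (hmax j hj)
    rcases le_total (g 0) (g n) with hc | hc
    · rw [max_eq_right hc] at h1
      have : Real.sqrt (g n) = nrm h (v n) := rfl
      linarith [h1, nrm_nonneg h (v 0), this]
    · rw [max_eq_left hc] at h1
      have : Real.sqrt (g 0) = nrm h (v 0) := rfl
      linarith [h1, nrm_nonneg h (v n), this]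
  have hAg : (v k m) ^ 2 ≤ 2 * (nrm h (v k) * nrm h (v (k + 1))) := by
    rw [hvs k]; exact agmon hh (hmem k) m
  set A := nrm h u + nrm h ((Dp h)^[n] u) with hA
  have hv0 : nrm h (v 0) = nrm h u := by simp [hv]
  have hvn : nrm h (v n) = nrm h ((Dp h)^[n] u) := rfl
  have ha : nrm h (v k) ≤ A := by
    rw [hA, ← hv0, ← hvn]; exact hNle k hk.le
  have hb : nrm h (v (k + 1)) ≤ A := by
    rw [hA, ← hv0, ← hvn]; exact hNle (k + 1) hk
  have hA0 : 0 ≤ A := by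
    rw [hA]; exact add_nonneg (nrm_nonneg _ _) (nrm_nonneg _ _)
  have hsq : (v k m) ^ 2 ≤ (2 * A) ^ 2 := by
    nlinarith [nrm_nonneg h (v k), nrm_nonneg h (v (k + 1))]
  calc |(Dp h)^[k] u m| = Real.sqrt ((v k m) ^ 2) := (Real.sqrt_sq_eq_abs _).symm
    _ ≤ Real.sqrt ((2 * A) ^ 2) := Real.sqrt_le_sqrt hsq
    _ = 2 * A := Real.sqrt_sq (by linarith)
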